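/- arXiv:1711.01816 — 2 statements merged into one kernel-verified Lean document; each statement's English description precedes it below -/
import Mathlib

section
/- If C is a Z₂Z₄[ξ]-linear code of type (r,s;k₀;k₁,k₂), then the dual code C⊥ is a Z₂Z₄[ξ]-linear code of type (r, s; r−k₀; s−k₁−k₂, k₂). -/
set_option synthInstance.maxHeartbeats 1000000
set_option maxHeartbeats 2000000

noncomputable section
open Polynomial

abbrev Z4 : Type := ZMod 4
abbrev Z2 : Type := ZMod 2

/-- The mod 2 reduction map `Z₄ → Z₂`. -/
def bar : Z4 →+* Z2 := ZMod.castHom (m := 2) (by norm_num) Z2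

/-- The ring `R₄ = Z₄[x]/⟨h⟩` (for `h` basic primitive, the Galois ring `GR(4,m)`). -/
abbrev R4 (h : Z4[X]) : Type := Z4[X] ⧸ Ideal.span {h}

/-- The ring `R₂ = Z₂[x]/⟨h̄⟩` (for `h` basic primitive, the field `F_{2^m}`). -/
abbrev R2 (h : Z4[X]) : Type := Z2[X] ⧸ Ideal.span {h.map bar}

/-- `ξ`, the class of `x` in `R₄`. -/
def xi (h : Z4[X]) : R4 h := Ideal.Quotient.mk _ X

/-- `ξ̄`, the class of `x` in `R₂`. -/
def xibar (h : Z4[X]) : R2 h := Ideal.Quotient.mk _ X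

/-- The coefficientwise mod 2 reduction `R₄ → R₂`. -/
def barR (h : Z4[X]) : R4 h →+* R2 h :=
  Ideal.quotientMap (Ideal.span {h.map bar}) (Polynomial.mapRingHom bar)
    (by
      rw [Ideal.span_le]
      intro p hp
      simp only [Set.mem_singleton_iff] at hp
      subst hp
      exact Ideal.mem_comap.mpr (Ideal.subset_span (by simp)))

/-- The canonical representative (of degree `< deg h`) of an element of `R₄`. -/
def rep4 (h : Z4[X]) (α : R4 h) : Z4[X] := Quotient.out α %ₘ h

/-- The canonical representative (of degree `< deg h̄`) of an element of `R₂`. -/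
def rep2 (h : Z4[X]) (α : R2 h) : Z2[X] := Quotient.out α %ₘ (h.map bar)

/-- The Frobenius map `θ₄ : ∑ vᵢ ξ^i ↦ ∑ vᵢ ξ^{2i}` of `R₄`, as a bare function:
substitute `ξ²` in the canonical representative. -/
def thetaFun4 (h : Z4[X]) (α : R4 h) : R4 h := Polynomial.aeval (xi h ^ 2) (rep4 h α)

/-- The Frobenius map `θ₂ : ∑ vᵢ ξ̄^i ↦ ∑ vᵢ ξ̄^{2i}` of `R₂`, as a bare function. -/
def thetaFun2 (h : Z4[X]) (α : R2 h) : R2 h := Polynomial.aeval (xibar h ^ 2) (rep2 h α)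

/-- A lift `ι : R₂ → R₄` with `ι` mod 2 the identity: lift the coefficients of the
canonical representative from `{0,1}`. -/
def iota (h : Z4[X]) (α : R2 h) : R4 h :=
  Ideal.Quotient.mk _ ((rep2 h α).sum fun i a => C ((a.val : Z4)) * X ^ i)

/-- `h` is a monic basic primitive polynomial of degree `m`:  `h` is monic, its mod 2
reduction `h̄` is irreducible over `Z₂`, and the root `ξ̄` of `h̄` is a primitive
element, i.e. has multiplicative order `2^m - 1`. -/
def BasicPrimitive (h : Z4[X]) (m : ℕ) : Prop :=
  h.Monic ∧ h.natDegree = m ∧ Irreducible (h.map bar) ∧ orderOf (xibar h) = 2 ^ m - 1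

/-- The scalar multiplication `γ * (α,β) = (γ̄α, γβ)` making `R₂^r × R₄^s` (or any
mixed-alphabet tuple space) an `R₄`-module. -/
def smulStar (h : Z4[X]) {α β : Type*} (γ : R4 h) (v : (α → R2 h) × (β → R4 h)) :
    (α → R2 h) × (β → R4 h) :=
  (fun i => barR h γ * v.1 i, fun j => γ * v.2 j)


/-- A `Z₂Z₄[ξ]`-linear code: an `R₄`-submodule of `R₂^r × R₄^s` (as a set). -/
def IsZ2Z4Linear (h : Z4[X]) {r s : ℕ} (C : Set ((Fin r → R2 h) × (Fin s → R4 h))) : Prop :=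
  0 ∈ C ∧ (∀ u ∈ C, ∀ v ∈ C, u + v ∈ C) ∧ ∀ γ : R4 h, ∀ u ∈ C, smulStar h γ u ∈ C

/-! ### Standard generator and parity-check matrices -/

/-- The set of all `R₄`-linear combinations (via the action `*`) of a finite family of
rows in `R₂^α × R₄^β`. -/
def rowSpan (h : Z4[X]) {ι α β : Type*} [Fintype ι]
    (rows : ι → (α → R2 h) × (β → R4 h)) : Set ((α → R2 h) × (β → R4 h)) :=
  {v | ∃ c : ι → R4 h, v = ∑ i, smulStar h (c i) (rows i)}

/-- The rows of the standard form generator matrix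
`G = [[I_{k₀}, Ā₀₁ | 0, 0, 2T], [0, S | I_{k₁}, A₀₁, A₀₂], [0, 0 | 0, 2I_{k₂}, 2A₁₂]]`. -/
def stdGenRows (h : Z4[X]) {r s k0 k1 k2 : ℕ}
    (A01b : Matrix (Fin k0) (Fin (r - k0)) (R2 h))
    (S : Matrix (Fin k1) (Fin (r - k0)) (R2 h))
    (T : Matrix (Fin k0) (Fin (s - k1 - k2)) (R4 h))
    (A01 : Matrix (Fin k1) (Fin k2) (R4 h))
    (A02 : Matrix (Fin k1) (Fin (s - k1 - k2)) (R4 h))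
    (A12 : Matrix (Fin k2) (Fin (s - k1 - k2)) (R4 h)) :
    (Fin k0 ⊕ Fin k1 ⊕ Fin k2) →
      ((Fin k0 ⊕ Fin (r - k0)) → R2 h) × ((Fin k1 ⊕ Fin k2 ⊕ Fin (s - k1 - k2)) → R4 h) :=
  fun row =>
    (fun col =>
      match row, col with
      | .inl i, .inl j => if i = j then 1 else 0
      | .inl i, .inr j => A01b i j
      | .inr (.inl i), .inr j => S i j
      | _, _ => 0,
     fun col =>
      match row, col with
      | .inl i, .inr (.inr j) => 2 * T i j
      | .inr (.inl i), .inl j => if i = j then 1 else 0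
      | .inr (.inl i), .inr (.inl j) => A01 i j
      | .inr (.inl i), .inr (.inr j) => A02 i j
      | .inr (.inr i), .inr (.inl j) => if i = j then 2 else 0
      | .inr (.inr i), .inr (.inr j) => 2 * A12 i j
      | _, _ => 0)

/-- `C` is (permutation equivalent to) a code of type `(r,s;k₀;k₁,k₂)`:  after a
permutation of the first `r` and of the last `s` coordinates (encoded by the
relabelings `e2`, `e4`) the code is exactly the `R₄`-span of the rows of the standard
form generator matrix. -/
def IsTypeCode (h : Z4[X]) (r s k0 k1 k2 : ℕ)
    (C : Set ((Fin r → R2 h) × (Fin s → R4 h))) : Prop :=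
  ∃ (A01b : Matrix (Fin k0) (Fin (r - k0)) (R2 h))
    (S : Matrix (Fin k1) (Fin (r - k0)) (R2 h))
    (T : Matrix (Fin k0) (Fin (s - k1 - k2)) (R4 h))
    (A01 : Matrix (Fin k1) (Fin k2) (R4 h))
    (A02 : Matrix (Fin k1) (Fin (s - k1 - k2)) (R4 h))
    (A12 : Matrix (Fin k2) (Fin (s - k1 - k2)) (R4 h))
    (e2 : Fin r ≃ (Fin k0 ⊕ Fin (r - k0)))
    (e4 : Fin s ≃ (Fin k1 ⊕ Fin k2 ⊕ Fin (s - k1 - k2))),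
    (fun v : (Fin r → R2 h) × (Fin s → R4 h) => (v.1 ∘ e2.symm, v.2 ∘ e4.symm)) '' C
      = rowSpan h (stdGenRows h A01b S T A01 A02 A12)

/-- The inner product
`⟨u,v⟩ = 2 ∑ᵢ ι(aᵢdᵢ) + ∑ⱼ bⱼeⱼ ∈ R₄` on `R₂^α × R₄^β`. -/
def innerP (h : Z4[X]) {α β : Type*} [Fintype α] [Fintype β]
    (u v : (α → R2 h) × (β → R4 h)) : R4 h :=
  2 * ∑ i, iota h (u.1 i * v.1 i) + ∑ j, u.2 j * v.2 j

/-- The dual code `C⊥ = {v : ⟨u,v⟩ = 0 for all u ∈ C}`. -/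
def dualCode (h : Z4[X]) {α β : Type*} [Fintype α] [Fintype β]
    (C : Set ((α → R2 h) × (β → R4 h))) : Set ((α → R2 h) × (β → R4 h)) :=
  {v | ∀ u ∈ C, innerP h u v = 0}

/-- The rows of the standard form parity-check matrix
`H = [[−Ā₀₁ᵀ, I_{r−k₀} | −2Sᵀ, 0, 0], [−Tᵀ, 0 | −A₀₂ᵀ + A₁₂ᵀA₀₁ᵀ, −A₁₂ᵀ, I_{s−k₁−k₂}],
[0, 0 | −2A₀₁ᵀ, 2I_{k₂}, 0]]`. -/
def stdParityRows (h : Z4[X]) {r s k0 k1 k2 : ℕ}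
    (A01b : Matrix (Fin k0) (Fin (r - k0)) (R2 h))
    (S : Matrix (Fin k1) (Fin (r - k0)) (R2 h))
    (T : Matrix (Fin k0) (Fin (s - k1 - k2)) (R4 h))
    (A01 : Matrix (Fin k1) (Fin k2) (R4 h))
    (A02 : Matrix (Fin k1) (Fin (s - k1 - k2)) (R4 h))
    (A12 : Matrix (Fin k2) (Fin (s - k1 - k2)) (R4 h)) :
    (Fin (r - k0) ⊕ Fin (s - k1 - k2) ⊕ Fin k2) →
      ((Fin k0 ⊕ Fin (r - k0)) → R2 h) × ((Fin k1 ⊕ Fin k2 ⊕ Fin (s - k1 - k2)) → R4 h) :=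
  fun row =>
    (fun col =>
      match row, col with
      | .inl i, .inl j => -(A01b j i)
      | .inl i, .inr j => if i = j then 1 else 0
      | .inr (.inl i), .inl j => -(barR h (T j i))
      | _, _ => 0,
     fun col =>
      match row, col with
      | .inl i, .inl j => -(2 * iota h (S j i))
      | .inr (.inl i), .inl j => -(A02 j i) + ∑ c, A12 c i * A01 j c
      | .inr (.inl i), .inr (.inl j) => -(A12 j i)
      | .inr (.inl i), .inr (.inr j) => if i = j then 1 else 0
      | .inr (.inr i), .inl j => -(2 * A01 j i)
      | .inr (.inr i), .inr (.inl j) => if i = j then 2 else 0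
      | _, _ => 0)

/-!
The dual is computed from the standard-form generator matrix `G`.  Every row of the
parity-check matrix `H` is orthogonal to every row of `G`.  Conversely, if `v ⊥ G`, pick the
combination `x` of rows of `H` agreeing with `v` on the columns where `H` carries its identity
blocks `I_{r-k₀}`, `I_{s-k₁-k₂}`, `2I_{k₂}`; for the last block a coefficient `t` with
`2t = v_j + ∑ A₁₂ v` exists because `v ⊥ G` forces `2(v_j + ∑ A₁₂ v) = 0`, and in `R₄` the
`2`-torsion is `2R₄`.  Then `v - x ⊥ G` vanishes on those columns, and the identity blocks
`I_{k₀}`, `I_{k₁}` of `G` force `v - x = 0`.  Throughout, `2R₄ = ker(R₄ → R₂) = 2`-torsion makes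
`z ↦ 2ι(z)` additive and `R₄`-linear, so `⟨·,·⟩` is `R₄`-bilinear.  Swapping column blocks
finally turns `H` into a standard-form generator matrix of type `(r,s;r-k₀;s-k₁-k₂,k₂)`.
-/

lemma bar_natCast_val (a : Z2) : bar (a.val : Z4) = a := by
  revert a; decide

lemma exists_eq_two_mul_of_bar_eq_zero {c : Z4} (hc : bar c = 0) : ∃ d, c = 2 * d := by
  revert c; decide

lemma bar_eq_zero_of_two_mul_eq_zero {c : Z4} (hc : 2 * c = 0) : bar c = 0 := by
  revert c; decide

lemma map_bar_sum_natCast_val (q : Z2[X]) :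
    (q.sum fun i a => C (a.val : Z4) * X ^ i).map bar = q := by
  simp only [Polynomial.sum_def, Polynomial.map_sum, Polynomial.map_mul, map_C, Polynomial.map_pow,
    map_X, bar_natCast_val]
  exact q.as_sum_support_C_mul_X_pow.symm

lemma two_dvd_of_map_bar_eq_zero {p : Z4[X]} (hp : p.map bar = 0) : 2 ∣ p := by
  choose d hd using fun n =>
    exists_eq_two_mul_of_bar_eq_zero (by rw [← coeff_map, hp, coeff_zero] : bar (p.coeff n) = 0)
  refine ⟨∑ n ∈ p.support, C (d n) * X ^ n, ?_⟩
  conv_lhs => rw [p.as_sum_support_C_mul_X_pow]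
  rw [Finset.mul_sum]
  refine Finset.sum_congr rfl fun n _ => ?_
  rw [hd, C_mul, C_ofNat, mul_assoc]

lemma map_bar_eq_zero_of_two_mul_eq_zero {p : Z4[X]} (hp : 2 * p = 0) : p.map bar = 0 := by
  ext n
  rw [coeff_map, coeff_zero]
  refine bar_eq_zero_of_two_mul_eq_zero ?_
  simpa using congrArg (coeff · n) hp

section GaloisRing

variable {h : Z4[X]}

@[simp]
lemma barR_mk (p : Z4[X]) :
    barR h (Ideal.Quotient.mk _ p) = Ideal.Quotient.mk _ (p.map bar) :=
  Ideal.quotientMap_mk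

lemma four_eq_zero_R4 : (4 : R4 h) = 0 := by
  have := map_ofNat (algebraMap Z4 (R4 h)) 4
  rw [show (OfNat.ofNat 4 : Z4) = 0 from rfl, map_zero] at this
  exact this.symm

lemma two_eq_zero_R2 : (2 : R2 h) = 0 := by
  have := map_ofNat (algebraMap Z2 (R2 h)) 2
  rw [show (OfNat.ofNat 2 : Z2) = 0 from rfl, map_zero] at this
  exact this.symm

lemma iota_zero (hmo : h.Monic) : iota h 0 = 0 := by
  have : rep2 h 0 = 0 := by
    rw [rep2, modByMonic_eq_zero_iff_dvd (hmo.map bar), ← Ideal.mem_span_singleton,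
      ← Ideal.Quotient.eq_zero_iff_mem, Ideal.Quotient.mk_out]
  simp [iota, this]

lemma barR_iota (z : R2 h) : barR h (iota h z) = z := by
  rw [iota, barR_mk, map_bar_sum_natCast_val, rep2]
  conv_rhs => rw [← Ideal.Quotient.mk_out z, ← modByMonic_add_div (Quotient.out z) (h.map bar),
    map_add, Ideal.Quotient.eq_zero_iff_mem.mpr
      (Ideal.mul_mem_right _ _ (Ideal.mem_span_singleton_self _)), add_zero]

lemma barR_eq_zero_iff {x : R4 h} : barR h x = 0 ↔ ∃ y, x = 2 * y := by
  refine ⟨fun hx => ?_, ?_⟩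
  · obtain ⟨p, rfl⟩ := Ideal.Quotient.mk_surjective x
    rw [barR_mk, Ideal.Quotient.eq_zero_iff_mem, Ideal.mem_span_singleton] at hx
    obtain ⟨g, hg⟩ := hx
    obtain ⟨t, ht⟩ :=
      two_dvd_of_map_bar_eq_zero (p := p - h * (g.sum fun i a => C (a.val : Z4) * X ^ i))
        (by rw [Polynomial.map_sub, Polynomial.map_mul, map_bar_sum_natCast_val, hg, sub_self])
    refine ⟨Ideal.Quotient.mk _ t, ?_⟩
    rw [eq_add_of_sub_eq' ht, map_add, map_mul, Ideal.Quotient.eq_zero_iff_mem.mpr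
      (Ideal.mem_span_singleton_self h), zero_mul, zero_add, map_mul, map_ofNat]
  · rintro ⟨y, rfl⟩
    rw [map_mul, map_ofNat, two_eq_zero_R2, zero_mul]

lemma two_mul_eq_zero_iff (hmo : h.Monic) {x : R4 h} : 2 * x = 0 ↔ ∃ y, x = 2 * y := by
  refine ⟨fun hx => barR_eq_zero_iff.mp ?_, ?_⟩
  · obtain ⟨p, rfl⟩ := Ideal.Quotient.mk_surjective x
    have hx' : Ideal.Quotient.mk (Ideal.span {h}) (2 * p) = 0 := by rwa [map_mul, map_ofNat]
    rw [Ideal.Quotient.eq_zero_iff_mem, Ideal.mem_span_singleton] at hx'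
    obtain ⟨q, hq⟩ := hx'
    have hq2 : (h * q).map bar = 0 := by
      rw [← hq, Polynomial.map_mul, Polynomial.map_ofNat, CharTwo.two_eq_zero (R := Z2[X]),
        zero_mul]
    -- `h̄` is monic, hence not a zero divisor in `Z₂[X]`
    obtain ⟨q', rfl⟩ : 2 ∣ q := two_dvd_of_map_bar_eq_zero
      ((mul_eq_zero.mp (by rwa [Polynomial.map_mul] at hq2)).resolve_left (hmo.map bar).ne_zero)
    have : 2 * (p - h * q') = 0 := by linear_combination hq
    rw [barR_mk, ← sub_add_cancel p (h * q'), Polynomial.map_add,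
      map_bar_eq_zero_of_two_mul_eq_zero this, zero_add, Ideal.Quotient.eq_zero_iff_mem,
      Polynomial.map_mul]
    exact Ideal.mul_mem_right _ _ (Ideal.mem_span_singleton_self _)
  · rintro ⟨y, rfl⟩
    rw [← mul_assoc, show (2 : R4 h) * 2 = 4 by norm_num, four_eq_zero_R4, zero_mul]

lemma two_mul_eq_two_mul_iff (hmo : h.Monic) {x y : R4 h} :
    2 * x = 2 * y ↔ barR h x = barR h y := by
  rw [← sub_eq_zero, ← mul_sub, two_mul_eq_zero_iff hmo, ← barR_eq_zero_iff, map_sub,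
    sub_eq_zero]

lemma two_mul_iota_eq_iff (hmo : h.Monic) {z : R2 h} {x : R4 h} :
    2 * iota h z = 2 * x ↔ barR h x = z := by
  rw [two_mul_eq_two_mul_iff hmo, barR_iota, eq_comm]

lemma two_mul_iota_eq_zero_iff (hmo : h.Monic) {z : R2 h} : 2 * iota h z = 0 ↔ z = 0 := by
  rw [← mul_zero (2 : R4 h), two_mul_iota_eq_iff hmo, map_zero, eq_comm]

lemma two_mul_iota_add (hmo : h.Monic) (z w : R2 h) :
    2 * iota h (z + w) = 2 * iota h z + 2 * iota h w := by
  rw [← mul_add, two_mul_iota_eq_iff hmo, map_add, barR_iota, barR_iota]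

lemma two_mul_iota_mul (hmo : h.Monic) (γ : R4 h) (z : R2 h) :
    2 * iota h (barR h γ * z) = γ * (2 * iota h z) := by
  rw [mul_left_comm, two_mul_iota_eq_iff hmo, map_mul, barR_iota]

lemma two_mul_iota_barR (hmo : h.Monic) (x : R4 h) : 2 * iota h (barR h x) = 2 * x :=
  (two_mul_iota_eq_iff hmo).mpr rfl

end GaloisRing

section Rows

variable {h : Z4[X]} {α β α' β' : Type*}

lemma sum_smulStar_fst {ι : Type*} [Fintype ι] (c : ι → R4 h)
    (rows : ι → (α → R2 h) × (β → R4 h)) (j : α) :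
    (∑ i, smulStar h (c i) (rows i)).1 j = ∑ i, barR h (c i) * (rows i).1 j := by
  rw [Prod.fst_sum, Finset.sum_apply]
  rfl

lemma sum_smulStar_snd {ι : Type*} [Fintype ι] (c : ι → R4 h)
    (rows : ι → (α → R2 h) × (β → R4 h)) (j : β) :
    (∑ i, smulStar h (c i) (rows i)).2 j = ∑ i, c i * (rows i).2 j := by
  rw [Prod.snd_sum, Finset.sum_apply]
  rfl

lemma mem_rowSpan_self {ι : Type*} [Fintype ι] (rows : ι → (α → R2 h) × (β → R4 h))
    (i : ι) : rows i ∈ rowSpan h rows := by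
  classical
  refine ⟨Pi.single i 1, ?_⟩
  rw [Finset.sum_eq_single i (fun j _ hj => by simp [smulStar, hj, ← Pi.zero_def]) (by simp)]
  simp [smulStar]

def reindexCoords (h : Z4[X]) (eα : α ≃ α') (eβ : β ≃ β') :
    ((α → R2 h) × (β → R4 h)) ≃+ ((α' → R2 h) × (β' → R4 h)) where
  toFun v := (v.1 ∘ eα.symm, v.2 ∘ eβ.symm)
  invFun v := (v.1 ∘ eα, v.2 ∘ eβ)
  left_inv v := by simp [Function.comp_assoc]
  right_inv v := by simp [Function.comp_assoc]
  map_add' _ _ := rfl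

lemma image_reindexCoords_rowSpan (eα : α ≃ α') (eβ : β ≃ β') {ι : Type*} [Fintype ι]
    (rows : ι → (α → R2 h) × (β → R4 h)) :
    reindexCoords h eα eβ '' rowSpan h rows = rowSpan h (reindexCoords h eα eβ ∘ rows) := by
  ext v
  constructor
  · rintro ⟨_, ⟨c, rfl⟩, rfl⟩
    exact ⟨c, by rw [map_sum]; rfl⟩
  · rintro ⟨c, rfl⟩
    exact ⟨_, ⟨c, rfl⟩, by rw [map_sum]; rfl⟩

end Rows

section InnerProduct

variable {h : Z4[X]} {α β : Type*} [Fintype α] [Fintype β]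

lemma innerP_comm (u v : (α → R2 h) × (β → R4 h)) : innerP h u v = innerP h v u := by
  simp only [innerP, mul_comm]

lemma innerP_add_right (hmo : h.Monic) (u v w : (α → R2 h) × (β → R4 h)) :
    innerP h u (v + w) = innerP h u v + innerP h u w := by
  simp only [innerP, Finset.mul_sum, Prod.fst_add, Prod.snd_add, Pi.add_apply, mul_add,
    two_mul_iota_add hmo, Finset.sum_add_distrib]
  ring

lemma innerP_smulStar_right (hmo : h.Monic) (γ : R4 h) (u v : (α → R2 h) × (β → R4 h)) :
    innerP h u (smulStar h γ v) = γ * innerP h u v := by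
  simp only [innerP, smulStar, Finset.mul_sum, mul_add, mul_left_comm _ (barR h γ),
    two_mul_iota_mul hmo, mul_left_comm _ γ]

def innerPAddHom (hmo : h.Monic) (u : (α → R2 h) × (β → R4 h)) :
    (α → R2 h) × (β → R4 h) →+ R4 h :=
  AddMonoidHom.mk' (innerP h u) (innerP_add_right hmo u)

lemma innerP_sum_smulStar_right (hmo : h.Monic) {ι : Type*} [Fintype ι] (c : ι → R4 h)
    (u : (α → R2 h) × (β → R4 h)) (rows : ι → (α → R2 h) × (β → R4 h)) :
    innerP h u (∑ i, smulStar h (c i) (rows i)) = ∑ i, c i * innerP h u (rows i) := by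
  simp only [← innerP_smulStar_right hmo]
  exact map_sum (innerPAddHom hmo u) _ _

lemma innerP_sub_right (hmo : h.Monic) (u v w : (α → R2 h) × (β → R4 h)) :
    innerP h u (v - w) = innerP h u v - innerP h u w :=
  map_sub (innerPAddHom hmo u) v w

lemma dualCode_rowSpan (hmo : h.Monic) {ι : Type*} [Fintype ι]
    (rows : ι → (α → R2 h) × (β → R4 h)) :
    dualCode h (rowSpan h rows) = {v | ∀ i, innerP h (rows i) v = 0} := by
  ext v
  refine ⟨fun hv i => hv _ (mem_rowSpan_self rows i), ?_⟩
  rintro hv u ⟨c, rfl⟩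
  rw [innerP_comm, innerP_sum_smulStar_right hmo]
  exact Finset.sum_eq_zero fun i _ => by rw [innerP_comm, hv i, mul_zero]

lemma sub_mem_dualCode (hmo : h.Monic) {C : Set ((α → R2 h) × (β → R4 h))} {v w}
    (hv : v ∈ dualCode h C) (hw : w ∈ dualCode h C) : v - w ∈ dualCode h C := fun u hu => by
  rw [innerP_sub_right hmo, hv u hu, hw u hu, sub_zero]

variable {α' β' : Type*} [Fintype α'] [Fintype β'] (eα : α ≃ α') (eβ : β ≃ β')

lemma innerP_reindexCoords (u v : (α → R2 h) × (β → R4 h)) :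
    innerP h (reindexCoords h eα eβ u) (reindexCoords h eα eβ v) = innerP h u v := by
  simp only [innerP, reindexCoords, AddEquiv.coe_mk, Equiv.coe_fn_mk, Function.comp_apply,
    Equiv.sum_comp eα.symm fun i => iota h (u.1 i * v.1 i),
    Equiv.sum_comp eβ.symm fun j => u.2 j * v.2 j]

lemma dualCode_image_reindexCoords (C : Set ((α → R2 h) × (β → R4 h))) :
    dualCode h (reindexCoords h eα eβ '' C) = reindexCoords h eα eβ '' dualCode h C := by
  ext v
  constructor
  · intro hv
    refine ⟨(reindexCoords h eα eβ).symm v, fun u hu => ?_, AddEquiv.apply_symm_apply _ v⟩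
    rw [← innerP_reindexCoords eα eβ, AddEquiv.apply_symm_apply]
    exact hv _ ⟨u, hu, rfl⟩
  · rintro ⟨w, hw, rfl⟩ _ ⟨u, hu, rfl⟩
    rw [innerP_reindexCoords]
    exact hw u hu

end InnerProduct

section StandardForm

variable {h : Z4[X]} {r s k0 k1 k2 : ℕ}
  {A01b : Matrix (Fin k0) (Fin (r - k0)) (R2 h)} {S : Matrix (Fin k1) (Fin (r - k0)) (R2 h)}
  {T : Matrix (Fin k0) (Fin (s - k1 - k2)) (R4 h)} {A01 : Matrix (Fin k1) (Fin k2) (R4 h)}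
  {A02 : Matrix (Fin k1) (Fin (s - k1 - k2)) (R4 h)}
  {A12 : Matrix (Fin k2) (Fin (s - k1 - k2)) (R4 h)}

lemma innerP_stdGenRows_stdParityRows (hmo : h.Monic) (i j) :
    innerP h (stdGenRows h A01b S T A01 A02 A12 i) (stdParityRows h A01b S T A01 A02 A12 j)
      = 0 := by
  rcases i with i | i | i <;> rcases j with j | j | j
  all_goals
    simp only [innerP, stdGenRows, stdParityRows, Fintype.sum_sum_type,
      apply_ite (iota h), ite_mul, mul_ite, mul_zero, zero_mul, mul_one, one_mul,
      iota_zero hmo, Finset.sum_ite_eq, Finset.mem_univ, if_true,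
      Finset.sum_const_zero, add_zero, zero_add]
  case inl.inl =>
    rw [mul_add, ← two_mul_iota_add hmo, neg_add_cancel, iota_zero hmo, mul_zero]
  case inl.inr.inl =>
    rw [← two_mul_iota_barR hmo (T i j), ← two_mul_iota_add hmo, neg_add_cancel,
      iota_zero hmo, mul_zero]
  case inr.inl.inl => ring
  case inr.inl.inr.inl =>
    have e : ∑ x, A01 i x * -A12 x j = -(∑ c, A12 c j * A01 i c) := by
      rw [← Finset.sum_neg_distrib]
      exact Finset.sum_congr rfl fun x _ => by ring
    rw [e]; ring
  case inr.inl.inr.inr => ring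
  case inr.inr.inr.inl => ring
  case inr.inr.inr.inr =>
    split_ifs
    · rw [show (2 : R4 h) * 2 = 4 by norm_num, four_eq_zero_R4]
    · rfl

lemma rowSpan_stdParityRows_subset_dualCode (hmo : h.Monic) :
    rowSpan h (stdParityRows h A01b S T A01 A02 A12)
      ⊆ dualCode h (rowSpan h (stdGenRows h A01b S T A01 A02 A12)) := by
  rw [dualCode_rowSpan hmo]
  rintro _ ⟨c, rfl⟩ i
  rw [innerP_sum_smulStar_right hmo]
  exact Finset.sum_eq_zero fun j _ => by
    rw [innerP_stdGenRows_stdParityRows hmo, mul_zero]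

lemma eq_zero_of_mem_dualCode_stdGenRows (hmo : h.Monic) {w}
    (hw : w ∈ dualCode h (rowSpan h (stdGenRows h A01b S T A01 A02 A12)))
    (h₁ : ∀ j, w.1 (.inr j) = 0) (h₂ : ∀ j, w.2 (.inr (.inl j)) = 0)
    (h₃ : ∀ j, w.2 (.inr (.inr j)) = 0) : w = 0 := by
  rw [dualCode_rowSpan hmo] at hw
  refine Prod.ext (funext ?_) (funext ?_)
  · rintro (i | j)
    · have hi := hw (.inl i)
      simp [innerP, stdGenRows, Fintype.sum_sum_type, h₁, h₃, apply_ite (iota h),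
        iota_zero hmo] at hi
      exact (two_mul_iota_eq_zero_iff hmo).mp hi
    · exact h₁ j
  · rintro (i | j | j)
    · have hi := hw (.inr (.inl i))
      simpa [innerP, stdGenRows, Fintype.sum_sum_type, h₁, h₂, h₃, iota_zero hmo] using hi
    · exact h₂ j
    · exact h₃ j

lemma exists_mem_rowSpan_stdParityRows_eq (hmo : h.Monic) {v}
    (hv : v ∈ dualCode h (rowSpan h (stdGenRows h A01b S T A01 A02 A12))) :
    ∃ x ∈ rowSpan h (stdParityRows h A01b S T A01 A02 A12),
      (∀ j, x.1 (.inr j) = v.1 (.inr j)) ∧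
        (∀ j, x.2 (.inr (.inl j)) = v.2 (.inr (.inl j))) ∧
        ∀ j, x.2 (.inr (.inr j)) = v.2 (.inr (.inr j)) := by
  rw [dualCode_rowSpan hmo] at hv
  have htwo : ∀ j, 2 * (v.2 (.inr (.inl j)) + ∑ i, A12 j i * v.2 (.inr (.inr i))) = 0 := by
    intro j
    have hj := hv (.inr (.inr j))
    simp [innerP, stdGenRows, Fintype.sum_sum_type, iota_zero hmo] at hj
    simpa [mul_add, Finset.mul_sum, mul_assoc] using hj
  choose t ht using fun j => (two_mul_eq_zero_iff hmo).mp (htwo j)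
  refine ⟨_, ⟨Sum.elim (fun j => iota h (v.1 (.inr j)))
    (Sum.elim (fun j => v.2 (.inr (.inr j))) t), rfl⟩, fun j => ?_, fun j => ?_, fun j => ?_⟩
  · simp [sum_smulStar_fst, Fintype.sum_sum_type, stdParityRows, barR_iota]
  · simp [sum_smulStar_snd, Fintype.sum_sum_type, stdParityRows]
    have hneg : ∑ x, v.2 (.inr (.inr x)) * -A12 j x = -∑ x, A12 j x * v.2 (.inr (.inr x)) := by
      rw [← Finset.sum_neg_distrib]
      exact Finset.sum_congr rfl fun _ _ => by ring
    rw [hneg, mul_comm (t j), ← ht j]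
    ring
  · simp [sum_smulStar_snd, Fintype.sum_sum_type, stdParityRows]

theorem dualCode_rowSpan_stdGenRows (hmo : h.Monic) :
    dualCode h (rowSpan h (stdGenRows h A01b S T A01 A02 A12))
      = rowSpan h (stdParityRows h A01b S T A01 A02 A12) := by
  refine subset_antisymm (fun v hv => ?_) (rowSpan_stdParityRows_subset_dualCode hmo)
  obtain ⟨x, hx, h₁, h₂, h₃⟩ := exists_mem_rowSpan_stdParityRows_eq hmo hv
  have hvx : v - x = 0 := eq_zero_of_mem_dualCode_stdGenRows hmo
    (sub_mem_dualCode hmo hv (rowSpan_stdParityRows_subset_dualCode hmo hx))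
    (fun j => by simp [h₁]) (fun j => by simp [h₂]) (fun j => by simp [h₃])
  rwa [sub_eq_zero.mp hvx]

def dualColsR2 (hr : r - (r - k0) = k0) :
    (Fin k0 ⊕ Fin (r - k0)) ≃ (Fin (r - k0) ⊕ Fin (r - (r - k0))) :=
  (Equiv.sumComm _ _).trans (Equiv.sumCongr (Equiv.refl _) (finCongr hr.symm))

def dualColsR4 (hs : s - (s - k1 - k2) - k2 = k1) :
    (Fin k1 ⊕ Fin k2 ⊕ Fin (s - k1 - k2)) ≃
      (Fin (s - k1 - k2) ⊕ Fin k2 ⊕ Fin (s - (s - k1 - k2) - k2)) where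
  toFun
    | .inl j => .inr (.inr (Fin.cast hs.symm j))
    | .inr (.inl j) => .inr (.inl j)
    | .inr (.inr j) => .inl j
  invFun
    | .inl j => .inr (.inr j)
    | .inr (.inl j) => .inr (.inl j)
    | .inr (.inr j) => .inl (Fin.cast hs j)
  left_inv := by rintro (j | j | j) <;> rfl
  right_inv := by rintro (j | j | j) <;> rfl

lemma reindexCoords_comp_stdParityRows (hr : r - (r - k0) = k0)
    (hs : s - (s - k1 - k2) - k2 = k1) :
    reindexCoords h (dualColsR2 hr) (dualColsR4 hs) ∘ stdParityRows h A01b S T A01 A02 A12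
      = stdGenRows h (fun i j => -A01b (Fin.cast hr j) i)
          (fun i j => -barR h (T (Fin.cast hr j) i))
          (fun i j => -iota h (S (Fin.cast hs j) i)) (fun i j => -A12 j i)
          (fun i j => -A02 (Fin.cast hs j) i + ∑ c, A12 c i * A01 (Fin.cast hs j) c)
          (fun i j => -A01 (Fin.cast hs j) i) := by
  funext ρ
  refine Prod.ext (funext fun x => ?_) (funext fun x => ?_)
  · rcases ρ with i | i | i <;> rcases x with j | j <;>
      simp [reindexCoords, dualColsR2, stdGenRows, stdParityRows, Equiv.sumCongr, finCongr]
  · rcases ρ with i | i | i <;> rcases x with j | j | j <;>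
      simp [reindexCoords, dualColsR4, stdGenRows, stdParityRows] <;> ring

end StandardForm

theorem dual_type_general
    (m : ℕ) (h : Z4[X]) (hbp : BasicPrimitive h m)
    (r s k0 k1 k2 : ℕ)
    (C : Set ((Fin r → R2 h) × (Fin s → R4 h)))
    (htype : IsTypeCode h r s k0 k1 k2 C) :
    IsTypeCode h r s (r - k0) (s - k1 - k2) k2 (dualCode h C) := by
  obtain ⟨A01b, S, T, A01, A02, A12, e2, e4, hC⟩ := htype
  have hr : r - (r - k0) = k0 := by
    have := Fintype.card_congr e2
    simp only [Fintype.card_fin, Fintype.card_sum] at this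
    omega
  have hs : s - (s - k1 - k2) - k2 = k1 := by
    have := Fintype.card_congr e4
    simp only [Fintype.card_fin, Fintype.card_sum] at this
    omega
  change reindexCoords h e2 e4 '' C = _ at hC
  have hdual : (reindexCoords h (dualColsR2 hr) (dualColsR4 hs) ∘ reindexCoords h e2 e4) ''
      dualCode h C = rowSpan h (reindexCoords h (dualColsR2 hr) (dualColsR4 hs) ∘
        stdParityRows h A01b S T A01 A02 A12) := by
    rw [Set.image_comp, ← dualCode_image_reindexCoords, hC,
      dualCode_rowSpan_stdGenRows hbp.1, image_reindexCoords_rowSpan]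
  rw [reindexCoords_comp_stdParityRows] at hdual
  exact ⟨_, _, _, _, _, _, e2.trans (dualColsR2 hr), e4.trans (dualColsR4 hs), hdual⟩

/-- If `C` is of type `(r,s;k₀;k₁,k₂)` then `C⊥` is of type
`(r,s;r−k₀;s−k₁−k₂,k₂)`. -/
theorem dual_type
    (m : ℕ) (hm : 1 ≤ m) (h : Z4[X]) (hbp : BasicPrimitive h m)
    (r s k0 k1 k2 : ℕ) (hr : 0 < r) (hs : 0 < s)
    (C : Set ((Fin r → R2 h) × (Fin s → R4 h))) (hC : IsZ2Z4Linear h C)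
    (htype : IsTypeCode h r s k0 k1 k2 C) :
    IsTypeCode h r s (r - k0) (s - k1 - k2) k2 (dualCode h C) :=
  dual_type_general m h hbp r s k0 k1 k2 C htype
end
end

section
/- Let C be a Z₂Z₄[ξ]-skew cyclic code, identified with a left R₄[x,θ₄]-submodule of R_θ, and let Ψ : C → R₄[x,θ₄]/⟨x^s−1⟩ be the projection onto the second coordinate. Then ker(Ψ) is a left R₄[x,θ₄]-submodule of C generated by a single element of the form (f(x), 0), where f(x) ∈ R₂[x,θ₂] is a right divisor of x^r−1 in R₂[x,θ₂]; equivalently, the set I = {f(x) ∈ R₂[x,θ₂]/⟨x^r−1⟩ : (f(x),0) ∈ C} is a principally generated left R₂[x,θ₂]-submodule of R₂[x,θ₂]/⟨x^r−1⟩. -/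
set_option synthInstance.maxHeartbeats 1000000
set_option maxHeartbeats 2000000

noncomputable section
open Polynomial

/-! ### Skew polynomial rings -/

/-- The additive endomorphism `p(x) ↦ pᶿ(x)·x` of `A[x]` (the twisted shift). -/
def Tmap {A : Type*} [CommRing A] (θ : A →+* A) : AddMonoid.End (Polynomial A) :=
  (AddMonoidHom.mulRight (X : Polynomial A)).comp (Polynomial.mapRingHom θ).toAddMonoidHom

/-- Left multiplication by the constant `a`, as an additive endomorphism of `A[x]`. -/
def Lmap {A : Type*} [CommRing A] (a : A) : AddMonoid.End (Polynomial A) :=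
  AddMonoidHom.mulLeft (C a)

/-- The skew polynomial ring `A[x;θ]`, realized as the subring of additive
endomorphisms of `A[x]` generated by the constants (acting by left multiplication)
and the twisted shift `Tmap θ`.  In this model multiplication is composition, so
`(a·xᵏ)·(b·xʲ) = a θᵏ(b) x^{k+j}`, i.e. `x·a = θ(a)·x`. -/
def SkewPolySubring (A : Type*) [CommRing A] (θ : A →+* A) :
    Subring (AddMonoid.End (Polynomial A)) :=
  Subring.closure ((Set.range (Lmap (A := A))) ∪ {Tmap θ})

/-- The skew polynomial ring `A[x;θ]` as a type. -/
abbrev Skew (A : Type*) [CommRing A] (θ : A →+* A) : Type _ := SkewPolySubring A θ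

/-- The element `x` of `A[x;θ]`. -/
def xSkew (A : Type*) [CommRing A] (θ : A →+* A) : Skew A θ :=
  ⟨Tmap θ, Subring.subset_closure (Set.mem_union_right _ rfl)⟩

/-- The constant `a` as an element of `A[x;θ]`. -/
def cSkew {A : Type*} [CommRing A] (θ : A →+* A) (a : A) : Skew A θ :=
  ⟨Lmap a, Subring.subset_closure (Set.mem_union_left _ ⟨a, rfl⟩)⟩

/-- The skew polynomial `∑ aᵢ xⁱ ∈ A[x;θ]` attached to coefficient data `p = ∑ aᵢ Xⁱ`. -/
def ofPoly {A : Type*} [CommRing A] (θ : A →+* A) (p : Polynomial A) : Skew A θ :=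
  p.sum fun i a => cSkew θ a * xSkew A θ ^ i

/-- The coefficient data of a skew polynomial, recovered by applying the
endomorphism to the polynomial `1`. -/
def toPoly {A : Type*} [CommRing A] {θ : A →+* A} (f : Skew A θ) : Polynomial A :=
  (f : AddMonoid.End (Polynomial A)) 1

/-- `g |ᵣ p` : `g` is a right divisor of `p` in `A[x;θ]`, i.e. `p = u·g`. -/
def RDvd {A : Type*} [CommRing A] {θ : A →+* A} (g p : Skew A θ) : Prop :=
  ∃ u : Skew A θ, p = u * g

/-- The left ideal `⟨x^n - 1⟩` of `A[x;θ]`. -/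
def skewIdeal (A : Type*) [CommRing A] (θ : A →+* A) (n : ℕ) :
    Submodule (Skew A θ) (Skew A θ) :=
  Submodule.span (Skew A θ) {xSkew A θ ^ n - 1}

/-- The quotient left `A[x;θ]`-module `A[x;θ]/⟨x^n-1⟩`. -/
abbrev SkewQuot (A : Type*) [CommRing A] (θ : A →+* A) (n : ℕ) : Type _ :=
  Skew A θ ⧸ skewIdeal A θ n

/-- The polynomial `c₀ + c₁X + ⋯ + c_{n-1}X^{n-1}` attached to a word `c ∈ Aⁿ`. -/
def wordPoly {A : Type*} [CommRing A] {n : ℕ} (c : Fin n → A) : Polynomial A :=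
  ∑ i : Fin n, C (c i) * X ^ (i : ℕ)

/-- Identify the word `c ∈ Aⁿ` with the class of `∑ cᵢ xⁱ` in `A[x;θ]/⟨x^n-1⟩`. -/
def wordToQuot {A : Type*} [CommRing A] (θ : A →+* A) {n : ℕ} (c : Fin n → A) :
    SkewQuot A θ n :=
  Submodule.Quotient.mk (ofPoly θ (wordPoly c))

/-- A linear code of length `n` over `A`: an `A`-submodule of `Aⁿ`, as a set. -/
def IsLinearCode (A : Type*) [CommRing A] {n : ℕ} (C : Set (Fin n → A)) : Prop :=
  0 ∈ C ∧ (∀ u ∈ C, ∀ v ∈ C, u + v ∈ C) ∧ ∀ γ : A, ∀ u ∈ C, γ • u ∈ C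

/-- The `θ`-cyclic shift `(c₀,…,c_{n-1}) ↦ (θ(c_{n-1}),θ(c₀),…,θ(c_{n-2}))`. -/
def skewShift {A : Type*} [CommRing A] (θ : A →+* A) {n : ℕ} [NeZero n]
    (c : Fin n → A) : Fin n → A :=
  fun i => θ (c (i - 1))
/-- The joint `θ`-cyclic shift on `R₂^r × R₄^s`. -/
def jointShift (h : Z4[X]) (θ2 : R2 h →+* R2 h) (θ4 : R4 h →+* R4 h) {r s : ℕ}
    [NeZero r] [NeZero s] (v : (Fin r → R2 h) × (Fin s → R4 h)) :
    (Fin r → R2 h) × (Fin s → R4 h) :=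
  (skewShift θ2 v.1, skewShift θ4 v.2)

/-- The identification of `R₂^r × R₄^s` with
`R_θ = R₂[x;θ₂]/⟨x^r-1⟩ × R₄[x;θ₄]/⟨x^s-1⟩`. -/
def pairToQuot (h : Z4[X]) (θ2 : R2 h →+* R2 h) (θ4 : R4 h →+* R4 h) {r s : ℕ}
    (v : (Fin r → R2 h) × (Fin s → R4 h)) :
    SkewQuot (R2 h) θ2 r × SkewQuot (R4 h) θ4 s :=
  (wordToQuot θ2 v.1, wordToQuot θ4 v.2)

/-- The coefficientwise mod 2 reduction `R₄[x;θ₄] → R₂[x;θ₂]`, `f ↦ f̄`. -/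
def redSkew (h : Z4[X]) (θ2 : R2 h →+* R2 h) {θ4 : R4 h →+* R4 h}
    (f : Skew (R4 h) θ4) : Skew (R2 h) θ2 :=
  ofPoly θ2 ((toPoly f).map (barR h))

/-- The left action of `R₄[x;θ₄]` on `R_θ`, `f * (g(x), h(x)) = (f̄ g mod (x^r-1), f h mod (x^s-1))`. -/
def smulRtheta (h : Z4[X]) (θ2 : R2 h →+* R2 h) (θ4 : R4 h →+* R4 h) {r s : ℕ}
    (f : Skew (R4 h) θ4)
    (u : SkewQuot (R2 h) θ2 r × SkewQuot (R4 h) θ4 s) :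
    SkewQuot (R2 h) θ2 r × SkewQuot (R4 h) θ4 s :=
  (redSkew h θ2 f • u.1, f • u.2)

/-- `D` is a left `R₄[x;θ₄]`-submodule of `R_θ` (with respect to the action above). -/
def IsLeftSubmodRtheta (h : Z4[X]) (θ2 : R2 h →+* R2 h) (θ4 : R4 h →+* R4 h) {r s : ℕ}
    (D : Set (SkewQuot (R2 h) θ2 r × SkewQuot (R4 h) θ4 s)) : Prop :=
  0 ∈ D ∧ (∀ u ∈ D, ∀ v ∈ D, u + v ∈ D) ∧
    ∀ f : Skew (R4 h) θ4, ∀ u ∈ D, smulRtheta h θ2 θ4 f u ∈ D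

/-!
`R₂` is a field, so `R₂[x;θ₂]` has a left division algorithm and every left ideal is generated
by any nonzero element of minimal degree. Linearity and skew cyclicity of `C` make
`I = {f : (f, 0) ∈ C}` a left submodule of `R₂[x;θ₂]/⟨x^r - 1⟩`. Its preimage in `R₂[x;θ₂]` is a
left ideal containing `x^r - 1`, so its generator `f` right-divides `x^r - 1` and its class
generates `I`. As reduction `R₄[x;θ₄] → R₂[x;θ₂]` is onto, `(f, 0)` then generates `ker Ψ`.
-/

namespace Skew

section CommRing

variable {A : Type*} [CommRing A] (θ : A →+* A)

theorem ext_apply {f g : Skew A θ}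
    (hfg : ∀ p, (f : AddMonoid.End A[X]) p = (g : AddMonoid.End A[X]) p) : f = g :=
  Subtype.ext (AddMonoidHom.ext hfg)

theorem cSkew_apply (a : A) (p : A[X]) :
    (cSkew θ a : AddMonoid.End A[X]) p = C a * p := rfl

theorem xSkew_apply (p : A[X]) : (xSkew A θ : AddMonoid.End A[X]) p = p.map θ * X := rfl

theorem mul_apply (f g : Skew A θ) (p : A[X]) :
    ((f * g : Skew A θ) : AddMonoid.End A[X]) p =
      (f : AddMonoid.End A[X]) ((g : AddMonoid.End A[X]) p) := rfl

theorem xSkew_pow_apply (k : ℕ) (p : A[X]) :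
    ((xSkew A θ ^ k : Skew A θ) : AddMonoid.End A[X]) p = p.map (θ ^ k) * X ^ k := by
  induction k generalizing p with
  | zero => simp [RingHom.one_def]
  | succ k ih =>
    rw [pow_succ', mul_apply, ih, xSkew_apply, Polynomial.map_mul, Polynomial.map_pow, map_X,
      Polynomial.map_map, ← RingHom.mul_def, ← pow_succ', mul_assoc, ← pow_succ]

theorem cSkew_zero : cSkew θ (0 : A) = 0 := ext_apply θ fun p => by simp [cSkew_apply]

theorem cSkew_one : cSkew θ (1 : A) = 1 := ext_apply θ fun p => by simp [cSkew_apply]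

theorem cSkew_add (a b : A) : cSkew θ (a + b) = cSkew θ a + cSkew θ b :=
  ext_apply θ fun p => by simp only [cSkew_apply, map_add, add_mul]; rfl

theorem cSkew_mul (a b : A) : cSkew θ (a * b) = cSkew θ a * cSkew θ b :=
  ext_apply θ fun p => by simp [cSkew_apply, mul_assoc]

theorem xSkew_mul_cSkew (a : A) : xSkew A θ * cSkew θ a = cSkew θ (θ a) * xSkew A θ :=
  ext_apply θ fun p => by
    simp only [mul_apply, cSkew_apply, xSkew_apply, Polynomial.map_mul, map_C, mul_assoc]

def ofPolyAddHom : A[X] →+ Skew A θ where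
  toFun := ofPoly θ
  map_zero' := by simp [ofPoly]
  map_add' p q := Polynomial.sum_add_index _ _ _ (fun _ => by rw [cSkew_zero, zero_mul])
    fun _ _ _ => by rw [cSkew_add, add_mul]

theorem ofPoly_add (p q : A[X]) : ofPoly θ (p + q) = ofPoly θ p + ofPoly θ q :=
  (ofPolyAddHom θ).map_add p q

theorem ofPoly_zero : ofPoly θ (0 : A[X]) = 0 := (ofPolyAddHom θ).map_zero

theorem ofPoly_neg (p : A[X]) : ofPoly θ (-p) = -ofPoly θ p := (ofPolyAddHom θ).map_neg p

theorem ofPoly_monomial (k : ℕ) (a : A) : ofPoly θ (monomial k a) = cSkew θ a * xSkew A θ ^ k :=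
  Polynomial.sum_monomial_index _ _ (by rw [cSkew_zero, zero_mul])

theorem ofPoly_one : ofPoly θ (1 : A[X]) = 1 := by
  rw [← monomial_zero_one, ofPoly_monomial, cSkew_one, pow_zero, mul_one]

theorem cSkew_mul_ofPoly (a : A) (q : A[X]) : cSkew θ a * ofPoly θ q = ofPoly θ (C a * q) := by
  induction q using Polynomial.induction_on' with
  | add p q hp hq => rw [ofPoly_add, mul_add, hp, hq, mul_add, ofPoly_add]
  | monomial k b => rw [ofPoly_monomial, ← mul_assoc, ← cSkew_mul, C_mul_monomial, ofPoly_monomial]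

theorem xSkew_mul_ofPoly (q : A[X]) : xSkew A θ * ofPoly θ q = ofPoly θ (q.map θ * X) := by
  induction q using Polynomial.induction_on' with
  | add p q hp hq => rw [ofPoly_add, mul_add, hp, hq, Polynomial.map_add, add_mul, ofPoly_add]
  | monomial k a =>
    rw [ofPoly_monomial, ← mul_assoc, xSkew_mul_cSkew, mul_assoc, ← pow_succ', map_monomial,
      monomial_mul_X, ofPoly_monomial]

theorem exists_eq_ofPoly (f : Skew A θ) : ∃ p, f = ofPoly θ p := by
  let S : Subring (AddMonoid.End A[X]) :=
    { carrier := {e | ∀ q, ∃ p, e * (ofPoly θ q).1 = (ofPoly θ p).1}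
      mul_mem' := fun {e₁ e₂} h₁ h₂ q => by
        obtain ⟨p₂, hp₂⟩ := h₂ q
        obtain ⟨p₁, hp₁⟩ := h₁ p₂
        exact ⟨p₁, by rw [mul_assoc, hp₂, hp₁]⟩
      one_mem' := fun q => ⟨q, one_mul _⟩
      add_mem' := fun {e₁ e₂} h₁ h₂ q => by
        obtain ⟨p₁, hp₁⟩ := h₁ q
        obtain ⟨p₂, hp₂⟩ := h₂ q
        exact ⟨p₁ + p₂, by rw [add_mul, hp₁, hp₂, ofPoly_add]; rfl⟩
      zero_mem' := fun q => ⟨0, by rw [zero_mul, ofPoly_zero]; rfl⟩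
      neg_mem' := fun {e} h q => by
        obtain ⟨p, hp⟩ := h q
        refine ⟨-p, ?_⟩
        rw [ofPoly_neg, NegMemClass.coe_neg, ← hp]
        exact AddMonoidHom.ext fun _ => rfl }
  have hle : SkewPolySubring A θ ≤ S := by
    refine Subring.closure_le.2 ?_
    rintro _ (⟨a, rfl⟩ | rfl) q
    · exact ⟨_, congrArg Subtype.val (cSkew_mul_ofPoly θ a q)⟩
    · exact ⟨_, congrArg Subtype.val (xSkew_mul_ofPoly θ q)⟩
  obtain ⟨p, hp⟩ := hle f.2 1
  exact ⟨p, Subtype.ext (by rwa [ofPoly_one, OneMemClass.coe_one, mul_one] at hp)⟩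

def toPolyAddHom : Skew A θ →+ A[X] where
  toFun := toPoly
  map_zero' := rfl
  map_add' _ _ := rfl

theorem toPoly_ofPoly (p : A[X]) : toPoly (ofPoly θ p) = p := by
  induction p using Polynomial.induction_on' with
  | add p q hp hq =>
    rw [ofPoly_add]
    exact ((toPolyAddHom θ).map_add _ _).trans (congrArg₂ (· + ·) hp hq)
  | monomial k a =>
    rw [ofPoly_monomial, toPoly, mul_apply, xSkew_pow_apply, cSkew_apply, Polynomial.map_one,
      one_mul, C_mul_X_pow_eq_monomial]

theorem ofPoly_toPoly (f : Skew A θ) : ofPoly θ (toPoly f) = f := by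
  obtain ⟨p, rfl⟩ := exists_eq_ofPoly θ f
  rw [toPoly_ofPoly]

theorem mk_mul_xSkew_pow_mod (n m : ℕ) (a : Skew A θ) :
    (Submodule.Quotient.mk (a * xSkew A θ ^ (m % n)) : SkewQuot A θ n) =
      Submodule.Quotient.mk (a * xSkew A θ ^ m) := by
  rw [Submodule.Quotient.eq]
  refine Submodule.mem_span_singleton.2
    ⟨-(a * xSkew A θ ^ (m % n) * ∑ i ∈ Finset.range (m / n), (xSkew A θ ^ n) ^ i), ?_⟩
  rw [smul_eq_mul, neg_mul, mul_assoc, geom_sum_mul, mul_sub, mul_one, mul_assoc, ← pow_mul,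
    ← pow_add, Nat.mod_add_div, neg_sub]

theorem wordToQuot_eq_sum {n : ℕ} (c : Fin n → A) :
    wordToQuot θ c = ∑ i, Submodule.Quotient.mk (cSkew θ (c i) * xSkew A θ ^ (i : ℕ)) := by
  change (skewIdeal A θ n).mkQ (ofPolyAddHom θ (wordPoly c)) = _
  simp only [wordPoly, map_sum, C_mul_X_pow_eq_monomial]
  exact Finset.sum_congr rfl fun i _ => congrArg Submodule.Quotient.mk (ofPoly_monomial θ _ _)

theorem wordToQuot_add {n : ℕ} (c d : Fin n → A) :
    wordToQuot θ (c + d) = wordToQuot θ c + wordToQuot θ d := by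
  simp only [wordToQuot_eq_sum, Pi.add_apply, cSkew_add, add_mul, Submodule.Quotient.mk_add,
    Finset.sum_add_distrib]

theorem wordToQuot_zero {n : ℕ} : wordToQuot θ (0 : Fin n → A) = 0 := by
  simp [wordToQuot_eq_sum, cSkew_zero]

theorem wordToQuot_const_mul {n : ℕ} (γ : A) (c : Fin n → A) :
    wordToQuot θ (fun i => γ * c i) = cSkew θ γ • wordToQuot θ c := by
  simp only [wordToQuot_eq_sum, Finset.smul_sum, ← Submodule.Quotient.mk_smul, smul_eq_mul,
    cSkew_mul, mul_assoc]

theorem wordToQuot_skewShift {n : ℕ} [NeZero n] (c : Fin n → A) :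
    wordToQuot θ (skewShift θ c) = xSkew A θ • wordToQuot θ c := by
  have hterm (i : Fin n) : xSkew A θ • (Submodule.Quotient.mk
      (cSkew θ (c i) * xSkew A θ ^ (i : ℕ)) : SkewQuot A θ n) =
      Submodule.Quotient.mk (cSkew θ (θ (c i)) * xSkew A θ ^ ((i + 1 : Fin n) : ℕ)) := by
    rw [← Submodule.Quotient.mk_smul, smul_eq_mul, ← mul_assoc, xSkew_mul_cSkew, mul_assoc,
      ← pow_succ', Fin.val_add, Fin.val_one', Nat.add_mod_mod, mk_mul_xSkew_pow_mod]
  rw [wordToQuot_eq_sum, wordToQuot_eq_sum, Finset.smul_sum,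
    Finset.sum_congr rfl fun i _ => hterm i]
  exact Fintype.sum_equiv (Equiv.subRight 1) _ _ fun j => by simp [skewShift]

variable {M : Type*} [AddCommMonoid M] [Module (Skew A θ) M]

theorem smul_mem_of_cSkew_of_xSkew (N : AddSubmonoid M) (hC : ∀ a, ∀ w ∈ N, cSkew θ a • w ∈ N)
    (hX : ∀ w ∈ N, xSkew A θ • w ∈ N) (d : Skew A θ) {w : M} (hw : w ∈ N) : d • w ∈ N := by
  have hXpow (k : ℕ) : ∀ w ∈ N, xSkew A θ ^ k • w ∈ N := by
    induction k with
    | zero => simp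
    | succ k ih => exact fun w hw => by rw [pow_succ, mul_smul]; exact ih _ (hX w hw)
  obtain ⟨p, rfl⟩ := exists_eq_ofPoly θ d
  induction p using Polynomial.induction_on' with
  | add p q hp hq => rw [ofPoly_add, add_smul]; exact N.add_mem hp hq
  | monomial k a => rw [ofPoly_monomial, mul_smul]; exact hC a _ (hXpow k w hw)

end CommRing

section Field

variable {A : Type*} [Field A] (θ : A →+* A)

theorem toPoly_ne_zero {f : Skew A θ} (hf : f ≠ 0) : toPoly f ≠ 0 := fun h0 =>
  hf (by rw [← ofPoly_toPoly θ f, h0, ofPoly_zero])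

theorem exists_degree_sub_mul_lt {g : Skew A θ} (hg : g ≠ 0) (p : Skew A θ) :
    ∃ u, (toPoly (p - u * g)).degree < (toPoly g).degree := by
  induction p using (InvImage.wf toPoly degree_lt_wf).induction with
  | _ p ih =>
  by_cases hlt : (toPoly p).degree < (toPoly g).degree
  · exact ⟨0, by rwa [zero_mul, sub_zero]⟩
  push Not at hlt
  set P := toPoly p
  set G := toPoly g
  have hG : G ≠ 0 := toPoly_ne_zero θ hg
  have hP : P ≠ 0 := fun h0 => hG (by rwa [h0, degree_zero, le_bot_iff, degree_eq_bot] at hlt)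
  -- kill the leading term of `p` with `c xʲ g`, whose coefficients are `c · θʲ(G) · Xʲ`
  set j := P.natDegree - G.natDegree
  have hθG : (θ ^ j) G.leadingCoeff ≠ 0 := _root_.map_ne_zero _ |>.2 (leadingCoeff_ne_zero.2 hG)
  set c := P.leadingCoeff / (θ ^ j) G.leadingCoeff
  have hc : c ≠ 0 := div_ne_zero (leadingCoeff_ne_zero.2 hP) hθG
  set t := cSkew θ c * xSkew A θ ^ j
  have htg : toPoly (t * g) = C c * (G.map (θ ^ j) * X ^ j) := by
    rw [toPoly, mul_apply, mul_apply, xSkew_pow_apply, cSkew_apply]; rfl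
  have hGj : G.map (θ ^ j) ≠ 0 := (Polynomial.map_ne_zero_iff (θ ^ j).injective).2 hG
  have hmap : G.map (θ ^ j) * X ^ j ≠ 0 := mul_ne_zero hGj (pow_ne_zero _ X_ne_zero)
  have hdeg : P.degree = (toPoly (t * g)).degree := by
    rw [htg, degree_eq_natDegree hP, degree_eq_natDegree (mul_ne_zero (C_ne_zero.2 hc) hmap),
      natDegree_C_mul hc, natDegree_mul_X_pow j hGj, natDegree_map,
      Nat.add_sub_cancel' (natDegree_le_natDegree hlt)]
  have hlc : P.leadingCoeff = (toPoly (t * g)).leadingCoeff := by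
    rw [htg, leadingCoeff_mul, leadingCoeff_C, leadingCoeff_mul_X_pow, leadingCoeff_map,
      div_mul_cancel₀ _ hθG]
  have hsub : toPoly (p - t * g) = P - toPoly (t * g) := (toPolyAddHom θ).map_sub p (t * g)
  obtain ⟨u, hu⟩ := ih (p - t * g) (by
    change (toPoly (p - t * g)).degree < P.degree
    rw [hsub]; exact degree_sub_lt_left hdeg hP hlc)
  exact ⟨u + t, by rwa [add_mul, ← sub_sub, sub_right_comm]⟩

instance : IsPrincipalIdealRing (Skew A θ) where
  principal S := by
    by_cases hS : S = ⊥
    · exact ⟨⟨0, by rw [hS, Submodule.span_zero_singleton]⟩⟩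
    obtain ⟨g₀, hg₀S, hg₀⟩ := Submodule.exists_mem_ne_zero_of_ne_bot hS
    set s : Set (Skew A θ) := {f | f ∈ S ∧ f ≠ 0}
    set g := Function.argminOn (fun f => (toPoly f).degree) s ⟨g₀, hg₀S, hg₀⟩
    obtain ⟨hgS, hg⟩ : g ∈ s := Function.argminOn_mem _ s _
    refine ⟨⟨g, le_antisymm (fun p hp => ?_) ((Submodule.span_singleton_le_iff_mem _ _).2 hgS)⟩⟩
    obtain ⟨u, hu⟩ := exists_degree_sub_mul_lt θ hg p
    have hrem : p - u * g = 0 := by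
      by_contra hne
      exact Function.not_lt_argminOn (fun f => (toPoly f).degree) s
        (show p - u * g ∈ s from ⟨S.sub_mem hp (S.smul_mem u hgS), hne⟩) hu
    exact Submodule.mem_span_singleton.2 ⟨u, (sub_eq_zero.1 hrem).symm⟩

theorem exists_rdvd_and_eq_span (n : ℕ) (I : Submodule (Skew A θ) (SkewQuot A θ n)) :
    ∃ f : A[X], RDvd (ofPoly θ f) (xSkew A θ ^ n - 1) ∧
      I = Submodule.span (Skew A θ) {Submodule.Quotient.mk (ofPoly θ f)} := by
  set J := I.comap (skewIdeal A θ n).mkQ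
  refine ⟨toPoly (Submodule.IsPrincipal.generator J), ?_, ?_⟩ <;> rw [ofPoly_toPoly]
  · have hmem : xSkew A θ ^ n - 1 ∈ J := by
      rw [Submodule.mem_comap, Submodule.mkQ_apply,
        (Submodule.Quotient.mk_eq_zero (skewIdeal A θ n)).2 (Submodule.mem_span_singleton_self _)]
      exact I.zero_mem
    exact (Submodule.IsPrincipal.mem_iff_eq_smul_generator J).1 hmem
  · calc I = J.map (skewIdeal A θ n).mkQ :=
          (Submodule.map_comap_eq_of_surjective (Submodule.mkQ_surjective _) I).symm
      _ = (Submodule.span (Skew A θ) {Submodule.IsPrincipal.generator J}).map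
            (skewIdeal A θ n).mkQ := by rw [Submodule.IsPrincipal.span_singleton_generator]
      _ = _ := by rw [Submodule.map_span, Set.image_singleton]; rfl

end Field

end Skew

section Code

variable (h : Z4[X]) (θ2 : R2 h →+* R2 h) (θ4 : R4 h →+* R4 h) {r s : ℕ}

theorem barR_surjective : Function.Surjective (barR h) :=
  Ideal.quotientMap_surjective (Polynomial.map_surjective bar (ZMod.ringHom_surjective bar))

theorem redSkew_surjective : Function.Surjective (redSkew h θ2 (θ4 := θ4)) := fun d => by
  obtain ⟨P, hP⟩ := Polynomial.map_surjective (barR h) (barR_surjective h) (toPoly d)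
  exact ⟨ofPoly θ4 P, by rw [redSkew, Skew.toPoly_ofPoly, hP, Skew.ofPoly_toPoly]⟩

theorem pairToQuot_zero : pairToQuot h θ2 θ4 (0 : (Fin r → R2 h) × (Fin s → R4 h)) = 0 :=
  Prod.ext (Skew.wordToQuot_zero θ2) (Skew.wordToQuot_zero θ4)

theorem pairToQuot_add (v w : (Fin r → R2 h) × (Fin s → R4 h)) :
    pairToQuot h θ2 θ4 (v + w) = pairToQuot h θ2 θ4 v + pairToQuot h θ2 θ4 w :=
  Prod.ext (Skew.wordToQuot_add θ2 _ _) (Skew.wordToQuot_add θ4 _ _)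

theorem pairToQuot_smulStar (γ : R4 h) (v : (Fin r → R2 h) × (Fin s → R4 h)) :
    pairToQuot h θ2 θ4 (smulStar h γ v) =
      (cSkew θ2 (barR h γ) • (pairToQuot h θ2 θ4 v).1, cSkew θ4 γ • (pairToQuot h θ2 θ4 v).2) :=
  Prod.ext (Skew.wordToQuot_const_mul θ2 _ _) (Skew.wordToQuot_const_mul θ4 _ _)

theorem pairToQuot_jointShift [NeZero r] [NeZero s] (v : (Fin r → R2 h) × (Fin s → R4 h)) :
    pairToQuot h θ2 θ4 (jointShift h θ2 θ4 v) =
      (xSkew (R2 h) θ2 • (pairToQuot h θ2 θ4 v).1, xSkew (R4 h) θ4 • (pairToQuot h θ2 θ4 v).2) :=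
  Prod.ext (Skew.wordToQuot_skewShift θ2 _) (Skew.wordToQuot_skewShift θ4 _)

variable {C : Set ((Fin r → R2 h) × (Fin s → R4 h))}

/-- The first components `I = {f : (f, 0) ∈ C}` of the codewords in `ker Ψ`. -/
def codeKernelAddSubmonoid (hlin : IsZ2Z4Linear h C) : AddSubmonoid (SkewQuot (R2 h) θ2 r) where
  carrier := {w | (w, 0) ∈ pairToQuot h θ2 θ4 '' C}
  zero_mem' := ⟨0, hlin.1, pairToQuot_zero h θ2 θ4⟩
  add_mem' := by
    rintro w w' ⟨v, hv, hvw⟩ ⟨v', hv', hvw'⟩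
    exact ⟨v + v', hlin.2.1 v hv v' hv', by
      rw [pairToQuot_add, hvw, hvw', Prod.mk_add_mk, add_zero]⟩

def codeKernel [NeZero r] [NeZero s] (hlin : IsZ2Z4Linear h C)
    (hcyc : ∀ v ∈ C, jointShift h θ2 θ4 v ∈ C) :
    Submodule (Skew (R2 h) θ2) (SkewQuot (R2 h) θ2 r) :=
  { codeKernelAddSubmonoid h θ2 θ4 hlin with
    smul_mem' := fun d _ hw => by
      refine Skew.smul_mem_of_cSkew_of_xSkew θ2 _ ?_ ?_ d hw
      · rintro a w ⟨v, hv, hvw⟩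
        obtain ⟨γ, rfl⟩ := barR_surjective h a
        exact ⟨smulStar h γ v, hlin.2.2 γ v hv, by rw [pairToQuot_smulStar, hvw, smul_zero]⟩
      · rintro w ⟨v, hv, hvw⟩
        exact ⟨jointShift h θ2 θ4 v, hcyc v hv, by rw [pairToQuot_jointShift, hvw, smul_zero]⟩ }

theorem sep_snd_eq_zero_eq_range_smulRtheta
    {S : Set (SkewQuot (R2 h) θ2 r × SkewQuot (R4 h) θ4 s)} {w₀ : SkewQuot (R2 h) θ2 r}
    (hS : {w | (w, (0 : SkewQuot (R4 h) θ4 s)) ∈ S} = Submodule.span (Skew (R2 h) θ2) {w₀}) :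
    {u ∈ S | u.2 = 0} = {v | ∃ c : Skew (R4 h) θ4, v = smulRtheta h θ2 θ4 c (w₀, 0)} := by
  ext ⟨w, z⟩
  simp only [Set.mem_ofPred_eq, smulRtheta, smul_zero, Prod.mk.injEq]
  constructor
  · rintro ⟨hwz, rfl⟩
    obtain ⟨d, rfl⟩ := Submodule.mem_span_singleton.1 ((Set.ext_iff.1 hS w).1 hwz)
    obtain ⟨c, rfl⟩ := redSkew_surjective h θ2 θ4 d
    exact ⟨c, rfl, rfl⟩
  · rintro ⟨c, rfl, rfl⟩
    exact ⟨(Set.ext_iff.1 hS _).2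
      (Submodule.smul_mem _ _ (Submodule.mem_span_singleton_self _)), rfl⟩

end Code

theorem z2z4_skew_cyclic_kernel_principal_general
    (m : ℕ) (h : Z4[X]) (hbp : BasicPrimitive h m)
    (θ4 : R4 h →+* R4 h)
    (θ2 : R2 h →+* R2 h)
    (r s : ℕ) [NeZero r] [NeZero s]
    (C : Set ((Fin r → R2 h) × (Fin s → R4 h))) (hlin : IsZ2Z4Linear h C)
    (hcyc : ∀ v ∈ C, jointShift h θ2 θ4 v ∈ C)
 :
    ∃ f : Polynomial (R2 h),
      RDvd (ofPoly θ2 f) (xSkew (R2 h) θ2 ^ r - 1) ∧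
      {u ∈ pairToQuot h θ2 θ4 '' C | u.2 = 0} =
        {v : SkewQuot (R2 h) θ2 r × SkewQuot (R4 h) θ4 s |
          ∃ c : Skew (R4 h) θ4, v = smulRtheta h θ2 θ4 c ((Submodule.Quotient.mk (p := skewIdeal (R2 h) θ2 r) (ofPoly θ2 f)), 0)} ∧
      {w : SkewQuot (R2 h) θ2 r | (w, (0 : SkewQuot (R4 h) θ4 s)) ∈ pairToQuot h θ2 θ4 '' C} =
        ↑(Submodule.span (Skew (R2 h) θ2) {(Submodule.Quotient.mk (p := skewIdeal (R2 h) θ2 r) (ofPoly θ2 f))}) := by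
  have : (Ideal.span {h.map bar}).IsMaximal :=
    PrincipalIdealRing.isMaximal_of_irreducible hbp.2.2.1
  let : Field (R2 h) := Ideal.Quotient.field _
  obtain ⟨f, hdvd, hI⟩ := Skew.exists_rdvd_and_eq_span θ2 r (codeKernel h θ2 θ4 hlin hcyc)
  have hI' := congrArg SetLike.coe hI
  exact ⟨f, hdvd, sep_snd_eq_zero_eq_range_smulRtheta h θ2 θ4 hI', hI'⟩

/-- The kernel of the projection `Ψ : C → R₄[x,θ₄]/⟨x^s−1⟩` is
generated by a single element `(f(x),0)` with `f(x)` a right divisor of `x^r−1` in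
`R₂[x,θ₂]`; equivalently `I = {f : (f,0) ∈ C}` is a principally generated left
`R₂[x,θ₂]`-submodule of `R₂[x,θ₂]/⟨x^r−1⟩`. -/
theorem z2z4_skew_cyclic_kernel_principal
    (m : ℕ) (hm : 1 ≤ m) (h : Z4[X]) (hbp : BasicPrimitive h m)
    (θ4 : R4 h →+* R4 h) (hθ4 : ⇑θ4 = thetaFun4 h)
    (θ2 : R2 h →+* R2 h) (hθ2 : ⇑θ2 = thetaFun2 h)
    (r s : ℕ) [NeZero r] [NeZero s]
    (C : Set ((Fin r → R2 h) × (Fin s → R4 h))) (hlin : IsZ2Z4Linear h C)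
    (hcyc : ∀ v ∈ C, jointShift h θ2 θ4 v ∈ C)
 :
    ∃ f : Polynomial (R2 h),
      RDvd (ofPoly θ2 f) (xSkew (R2 h) θ2 ^ r - 1) ∧
      {u ∈ pairToQuot h θ2 θ4 '' C | u.2 = 0} =
        {v : SkewQuot (R2 h) θ2 r × SkewQuot (R4 h) θ4 s |
          ∃ c : Skew (R4 h) θ4, v = smulRtheta h θ2 θ4 c ((Submodule.Quotient.mk (p := skewIdeal (R2 h) θ2 r) (ofPoly θ2 f)), 0)} ∧
      {w : SkewQuot (R2 h) θ2 r | (w, (0 : SkewQuot (R4 h) θ4 s)) ∈ pairToQuot h θ2 θ4 '' C} =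
        ↑(Submodule.span (Skew (R2 h) θ2) {(Submodule.Quotient.mk (p := skewIdeal (R2 h) θ2 r) (ofPoly θ2 f))}) :=
  z2z4_skew_cyclic_kernel_principal_general m h hbp θ4 θ2 r s C hlin hcyc
end
end
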